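/- Let d := sup_{n≥0} ‖D_n‖ < ∞, let z ∈ ℂ, and let u, v : ℤ_+ → ℂ^l satisfy the eigenvalue equation D_{n−1}w_{n−1} + D_n w_{n+1} + V_n w_n = z w_n for all n ≥ 1. Suppose C := W_{[u,v]}(1) = u_1^t D_0 v_0 − v_1^t D_0 u_0 ≠ 0. Then: (a) for every n ≥ 1, ‖u_n‖‖v_{n−1}‖ + ‖v_n‖‖u_{n−1}‖ ≥ |C|/d; (b) if in addition there are c_0, α > 0 with ‖u_n‖ ≤ c_0 e^{−α n} for all n ≥ 0, then for every n ≥ 1, ‖v_{n−1}‖ + ‖v_n‖ ≥ (|C|/(d·c_0)) e^{α(n−1)}; in particular ‖v_n‖ grows exponentially along a subsequence. -/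

import Mathlib

/-!
Because `D n` and `V n` are symmetric, the Wronskian of two solutions of the same eigenvalue
equation is conserved, so it equals `C` at every `n ≥ 1`. Cauchy–Schwarz and `‖D_{n-1}‖ ≤ d`
bound it by `d (‖u_n‖‖v_{n-1}‖ + ‖v_n‖‖u_{n-1}‖)`, which is (a); inserting the exponential
decay of `u` into (a) gives (b).
-/

open Matrix

noncomputable section

def cmat {l : ℕ} (A : Matrix (Fin l) (Fin l) ℝ) : Matrix (Fin l) (Fin l) ℂ :=
  A.map (Complex.ofReal)

def opNorm {l : ℕ} (A : Matrix (Fin l) (Fin l) ℝ) : ℝ :=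
  ‖Matrix.toEuclideanCLM (𝕜 := ℝ) (n := Fin l) A‖

def evnorm {l : ℕ} (w : Fin l → ℂ) : ℝ :=
  Real.sqrt (∑ i, ‖w i‖ ^ 2)

section Norms

variable {l : ℕ}

lemma evnorm_eq_norm_toLp (w : Fin l → ℂ) : evnorm w = ‖WithLp.toLp 2 w‖ := by
  rw [EuclideanSpace.norm_eq]; rfl

lemma evnorm_nonneg (w : Fin l → ℂ) : 0 ≤ evnorm w := Real.sqrt_nonneg _

lemma evnorm_sq (w : Fin l → ℂ) :
    evnorm w ^ 2
      = ‖WithLp.toLp 2 (fun i ↦ (w i).re)‖ ^ 2 + ‖WithLp.toLp 2 (fun i ↦ (w i).im)‖ ^ 2 := by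
  rw [evnorm_eq_norm_toLp, EuclideanSpace.norm_sq_eq, EuclideanSpace.real_norm_sq_eq,
    EuclideanSpace.real_norm_sq_eq, ← Finset.sum_add_distrib]
  congr! 1 with i
  rw [Complex.sq_norm, Complex.normSq_apply, sq, sq]

lemma norm_dotProduct_le (x y : Fin l → ℂ) : ‖x ⬝ᵥ y‖ ≤ evnorm x * evnorm y := by
  have h : x ⬝ᵥ y = inner ℂ (WithLp.toLp 2 (star x)) (WithLp.toLp 2 y) := by
    rw [EuclideanSpace.inner_toLp_toLp, star_star, dotProduct_comm]
  have hstar : evnorm (star x) = evnorm x := by simp [evnorm]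
  rw [h, ← hstar, evnorm_eq_norm_toLp, evnorm_eq_norm_toLp]
  exact norm_inner_le_norm _ _

lemma norm_toLp_mulVec_le (A : Matrix (Fin l) (Fin l) ℝ) (x : Fin l → ℝ) :
    ‖WithLp.toLp 2 (A *ᵥ x)‖ ≤ opNorm A * ‖WithLp.toLp 2 x‖ :=
  (Matrix.toEuclideanCLM (𝕜 := ℝ) (n := Fin l) A).le_opNorm (WithLp.toLp 2 x)

lemma re_cmat_mulVec (A : Matrix (Fin l) (Fin l) ℝ) (w : Fin l → ℂ) (i : Fin l) :
    ((cmat A *ᵥ w) i).re = (A *ᵥ fun j ↦ (w j).re) i := by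
  simp [cmat, mulVec, dotProduct, Complex.re_sum]

lemma im_cmat_mulVec (A : Matrix (Fin l) (Fin l) ℝ) (w : Fin l → ℂ) (i : Fin l) :
    ((cmat A *ᵥ w) i).im = (A *ᵥ fun j ↦ (w j).im) i := by
  simp [cmat, mulVec, dotProduct, Complex.im_sum]

-- A real matrix acts separately on real and imaginary parts.
lemma evnorm_cmat_mulVec_le (A : Matrix (Fin l) (Fin l) ℝ) (w : Fin l → ℂ) :
    evnorm (cmat A *ᵥ w) ≤ opNorm A * evnorm w := by
  have hA : 0 ≤ opNorm A := norm_nonneg _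
  refine le_of_sq_le_sq ?_ (mul_nonneg hA (evnorm_nonneg w))
  rw [mul_pow, evnorm_sq, evnorm_sq, mul_add]
  simp only [re_cmat_mulVec, im_cmat_mulVec, ← mul_pow]
  gcongr <;> exact norm_toLp_mulVec_le A _

lemma cmat_isSymm {A : Matrix (Fin l) (Fin l) ℝ} (hA : A.IsSymm) : (cmat A).IsSymm :=
  hA.map _

end Norms

lemma Matrix.IsSymm.dotProduct_mulVec_comm {ι R : Type*} [Fintype ι] [CommSemiring R]
    {A : Matrix ι ι R} (hA : A.IsSymm) (x y : ι → R) : x ⬝ᵥ (A *ᵥ y) = (A *ᵥ x) ⬝ᵥ y := by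
  rw [dotProduct_mulVec, ← mulVec_transpose, hA]

section Wronskian

variable {ι R : Type*} [Fintype ι] [CommRing R]

def IsJacobiSolution (D V : ℕ → Matrix ι ι R) (z : R) (u : ℕ → ι → R) : Prop :=
  ∀ n : ℕ, 1 ≤ n → D (n - 1) *ᵥ u (n - 1) + D n *ᵥ u (n + 1) + V n *ᵥ u n = z • u n

/-- `wronskian D u v n` is the paper's `W_{[u,v]}(n + 1)`; the shift avoids truncated
subtraction. -/
def wronskian (D : ℕ → Matrix ι ι R) (u v : ℕ → ι → R) (n : ℕ) : R :=
  u (n + 1) ⬝ᵥ (D n *ᵥ v n) - v (n + 1) ⬝ᵥ (D n *ᵥ u n)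

variable {D V : ℕ → Matrix ι ι R} {z : R} {u v : ℕ → ι → R}

lemma IsJacobiSolution.mulVec_succ (hu : IsJacobiSolution D V z u) (n : ℕ) :
    D (n + 1) *ᵥ u (n + 2) = z • u (n + 1) - V (n + 1) *ᵥ u (n + 1) - D n *ᵥ u n := by
  rw [← hu (n + 1) (Nat.le_add_left 1 n), Nat.add_sub_cancel]
  abel

lemma wronskian_succ (hD : ∀ n, (D n).IsSymm) (hV : ∀ n, (V n).IsSymm)
    (hu : IsJacobiSolution D V z u) (hv : IsJacobiSolution D V z v) (n : ℕ) :
    wronskian D u v (n + 1) = wronskian D u v n := by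
  have hVuv := (hV (n + 1)).dotProduct_mulVec_comm (u (n + 1)) (v (n + 1))
  unfold wronskian
  rw [(hD (n + 1)).dotProduct_mulVec_comm (u (n + 2)),
    (hD (n + 1)).dotProduct_mulVec_comm (v (n + 2)), hu.mulVec_succ, hv.mulVec_succ]
  simp only [sub_dotProduct, smul_dotProduct, smul_eq_mul]
  rw [dotProduct_comm (u (n + 1)) (v (n + 1)), dotProduct_comm (V (n + 1) *ᵥ v (n + 1)),
    dotProduct_comm (D n *ᵥ u n), dotProduct_comm (D n *ᵥ v n)]
  linear_combination hVuv

lemma wronskian_eq_wronskian_zero (hD : ∀ n, (D n).IsSymm) (hV : ∀ n, (V n).IsSymm)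
    (hu : IsJacobiSolution D V z u) (hv : IsJacobiSolution D V z v) (n : ℕ) :
    wronskian D u v n = wronskian D u v 0 := by
  induction n with
  | zero => rfl
  | succ n ih => rw [wronskian_succ hD hV hu hv, ih]

end Wronskian

lemma norm_wronskian_cmat_le {l : ℕ} {D : ℕ → Matrix (Fin l) (Fin l) ℝ} {d : ℝ} {n : ℕ}
    (hD : opNorm (D n) ≤ d) (u v : ℕ → Fin l → ℂ) :
    ‖wronskian (fun n ↦ cmat (D n)) u v n‖
      ≤ d * (evnorm (u (n + 1)) * evnorm (v n) + evnorm (v (n + 1)) * evnorm (u n)) := by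
  have hDw : ∀ w, evnorm (cmat (D n) *ᵥ w) ≤ d * evnorm w := fun w ↦
    (evnorm_cmat_mulVec_le _ w).trans (mul_le_mul_of_nonneg_right hD (evnorm_nonneg w))
  calc ‖wronskian (fun n ↦ cmat (D n)) u v n‖
      ≤ evnorm (u (n + 1)) * evnorm (cmat (D n) *ᵥ v n)
        + evnorm (v (n + 1)) * evnorm (cmat (D n) *ᵥ u n) :=
        (norm_sub_le _ _).trans (add_le_add (norm_dotProduct_le _ _) (norm_dotProduct_le _ _))
    _ ≤ evnorm (u (n + 1)) * (d * evnorm (v n)) + evnorm (v (n + 1)) * (d * evnorm (u n)) := by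
        gcongr <;> first | exact evnorm_nonneg _ | exact hDw _
    _ = d * (evnorm (u (n + 1)) * evnorm (v n) + evnorm (v (n + 1)) * evnorm (u n)) := by ring

lemma div_le_add_of_le_mul_add_mul {K a a' b b' c : ℝ} (hc : 0 < c) (hb : 0 ≤ b)
    (hb' : 0 ≤ b') (hK : K ≤ a * b + b' * a') (ha : a ≤ c) (ha' : a' ≤ c) : K / c ≤ b + b' := by
  rw [div_le_iff₀ hc]
  calc K ≤ a * b + b' * a' := hK
    _ ≤ c * b + b' * c := by gcongr
    _ = (b + b') * c := by ring

theorem wronskian_lower_bounds_general (l : ℕ)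
    (D V : ℕ → Matrix (Fin l) (Fin l) ℝ)
    (hDsymm : ∀ n, (D n).IsSymm) (hVsymm : ∀ n, (V n).IsSymm)
    (d : ℝ) (hd : 0 < d) (hDbdd : ∀ n, opNorm (D n) ≤ d)
    (z : ℂ) (u v : ℕ → Fin l → ℂ)
    (hu : ∀ n : ℕ, 1 ≤ n → cmat (D (n - 1)) *ᵥ u (n - 1) + cmat (D n) *ᵥ u (n + 1)
        + cmat (V n) *ᵥ u n = z • u n)
    (hv : ∀ n : ℕ, 1 ≤ n → cmat (D (n - 1)) *ᵥ v (n - 1) + cmat (D n) *ᵥ v (n + 1)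
        + cmat (V n) *ᵥ v n = z • v n)
    (C : ℂ)
    (hC : C = u 1 ⬝ᵥ (cmat (D 0) *ᵥ v 0) - v 1 ⬝ᵥ (cmat (D 0) *ᵥ u 0)) :
    (∀ n : ℕ, 1 ≤ n →
        evnorm (u n) * evnorm (v (n - 1)) + evnorm (v n) * evnorm (u (n - 1))
          ≥ ‖C‖ / d) ∧
      (∀ c₀ α : ℝ, 0 < c₀ → 0 < α →
        (∀ n : ℕ, evnorm (u n) ≤ c₀ * Real.exp (-α * n)) →
        ∀ n : ℕ, 1 ≤ n →
          evnorm (v (n - 1)) + evnorm (v n)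
            ≥ (‖C‖ / (d * c₀)) * Real.exp (α * ((n : ℝ) - 1))) := by
  have hwronskian (m : ℕ) : wronskian (fun n ↦ cmat (D n)) u v m = C :=
    (wronskian_eq_wronskian_zero (fun n ↦ cmat_isSymm (hDsymm n))
      (fun n ↦ cmat_isSymm (hVsymm n)) hu hv m).trans hC.symm
  have hbound (m : ℕ) :
      ‖C‖ / d ≤ evnorm (u (m + 1)) * evnorm (v m) + evnorm (v (m + 1)) * evnorm (u m) := by
    rw [div_le_iff₀' hd, ← hwronskian m]
    exact norm_wronskian_cmat_le (hDbdd m) u v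
  refine ⟨fun n hn ↦ ?_, fun c₀ α hc₀ hα hdecay n hn ↦ ?_⟩ <;>
    obtain ⟨m, rfl⟩ := Nat.exists_eq_add_of_le' hn <;> rw [Nat.add_sub_cancel]
  · exact hbound m
  have hdecay_succ : evnorm (u (m + 1)) ≤ c₀ * Real.exp (-α * m) := by
    refine (hdecay (m + 1)).trans (mul_le_mul_of_nonneg_left (Real.exp_le_exp.mpr ?_) hc₀.le)
    push_cast
    linarith
  convert div_le_add_of_le_mul_add_mul (by positivity) (evnorm_nonneg _) (evnorm_nonneg _)
    (hbound m) hdecay_succ (hdecay m) using 1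
  push_cast
  rw [add_sub_cancel_right, neg_mul, Real.exp_neg]
  field_simp

/-- Lower bounds coming from a nonzero Wronskian: part (a) gives
`‖u_n‖‖v_{n-1}‖ + ‖v_n‖‖u_{n-1}‖ ≥ |C|/d`, and part (b) shows that if `u` decays
exponentially then `‖v_{n-1}‖ + ‖v_n‖ ≥ (|C|/(d c₀)) e^{α(n-1)}`. -/
theorem wronskian_lower_bounds (l : ℕ) (hl : 1 ≤ l)
    (D V : ℕ → Matrix (Fin l) (Fin l) ℝ)
    (hDsymm : ∀ n, (D n).IsSymm) (hVsymm : ∀ n, (V n).IsSymm)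
    (hDinv : ∀ n, IsUnit (D n).det)
    (d : ℝ) (hd : 0 < d) (hDbdd : ∀ n, opNorm (D n) ≤ d)
    (z : ℂ) (u v : ℕ → Fin l → ℂ)
    (hu : ∀ n : ℕ, 1 ≤ n → cmat (D (n - 1)) *ᵥ u (n - 1) + cmat (D n) *ᵥ u (n + 1)
        + cmat (V n) *ᵥ u n = z • u n)
    (hv : ∀ n : ℕ, 1 ≤ n → cmat (D (n - 1)) *ᵥ v (n - 1) + cmat (D n) *ᵥ v (n + 1)
        + cmat (V n) *ᵥ v n = z • v n)
    (C : ℂ)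
    (hC : C = u 1 ⬝ᵥ (cmat (D 0) *ᵥ v 0) - v 1 ⬝ᵥ (cmat (D 0) *ᵥ u 0))
    (hC0 : C ≠ 0) :
    (∀ n : ℕ, 1 ≤ n →
        evnorm (u n) * evnorm (v (n - 1)) + evnorm (v n) * evnorm (u (n - 1))
          ≥ ‖C‖ / d) ∧
      (∀ c₀ α : ℝ, 0 < c₀ → 0 < α →
        (∀ n : ℕ, evnorm (u n) ≤ c₀ * Real.exp (-α * n)) →
        ∀ n : ℕ, 1 ≤ n →
          evnorm (v (n - 1)) + evnorm (v n)
            ≥ (‖C‖ / (d * c₀)) * Real.exp (α * ((n : ℝ) - 1))) :=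
  wronskian_lower_bounds_general l D V hDsymm hVsymm d hd hDbdd z u v hu hv C hC
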